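/- Let C ⊆ ℝ^n be a convex set, x ∈ C, and y a point in the relative interior of a face F of C with x ∈ F. Then N(y) ⊆ N(x). -/

import Mathlib

open RealInnerProductSpace Set
open scoped ENNReal

noncomputable section

abbrev Eu (n : ℕ) := EuclideanSpace ℝ (Fin n)

/-- The dual of a set: `C* = {u | 1 + ⟪u,v⟫ ≥ 0 for all v ∈ C}`. -/
def dualSet {n : ℕ} (C : Set (Eu n)) : Set (Eu n) := {u | ∀ v ∈ C, 0 ≤ 1 + ⟪u, v⟫}

/-- The polar of a set: `C° = {u | ⟪u,v⟫ ≤ 1 for all v ∈ C}`. -/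
def polarSet {n : ℕ} (C : Set (Eu n)) : Set (Eu n) := {u | ∀ v ∈ C, ⟪u, v⟫ ≤ 1}

/-- The support function `h_C(u) = sup {⟪x,u⟫ | x ∈ C}`. -/
def supp {n : ℕ} (C : Set (Eu n)) (u : Eu n) : ℝ := sSup ((fun x => ⟪x, u⟫) '' C)

/-- The radial function `ρ_K(u) = sup {λ ≥ 0 | λ • u ∈ K}`. -/
def radial {n : ℕ} (K : Set (Eu n)) (u : Eu n) : ℝ := sSup {l : ℝ | 0 ≤ l ∧ l • u ∈ K}

/-- The normal cone of `C` at `x`. -/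
def normalCone {n : ℕ} (C : Set (Eu n)) (x : Eu n) : Set (Eu n) :=
  {u | ∀ y ∈ C, ⟪u, y - x⟫ ≤ 0}

/-- `F` is a face of the convex set `C`. -/
def IsFace {n : ℕ} (C F : Set (Eu n)) : Prop :=
  F ⊆ C ∧ Convex ℝ F ∧ ∀ x ∈ C, ∀ z ∈ C, ∀ y ∈ F, y ∈ openSegment ℝ x z → x ∈ F ∧ z ∈ F

/-- `F` is an exposed face of `C`: it is `∅`, `C`, or `C ∩ H_C(u)` for some nonzero `u`. -/
def IsExposedFace {n : ℕ} (C F : Set (Eu n)) : Prop :=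
  F = ∅ ∨ F = C ∨ ∃ u : Eu n, u ≠ 0 ∧ F = {x ∈ C | ⟪x, u⟫ = supp C u}

/-- The conjugate face of a subset `F` of `C`, inside the polar body. -/
def conjFace {n : ℕ} (C F : Set (Eu n)) : Set (Eu n) :=
  {v ∈ polarSet C | ∀ u ∈ F, ⟪v, u⟫ = 1}

/-- The positive hull: `pos(X) = {λx | λ ≥ 0, x ∈ X}` for nonempty `X`, and `pos ∅ = {0}`. -/
def posHull {n : ℕ} (X : Set (Eu n)) : Set (Eu n) :=
  {w | w = 0 ∨ ∃ l : ℝ, 0 ≤ l ∧ ∃ x ∈ X, w = l • x}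

def e₁ : Eu 2 := EuclideanSpace.single 0 1

/-- The closed upper half-plane. -/
def Hplus : Set (Eu 2) := {p | 0 ≤ p 1}

/-- The closed lower half-plane. -/
def Hminus : Set (Eu 2) := {p | p 1 ≤ 0}

/-! Since `y` is relatively interior to `F`, the ray from `x` through `y` stays in `F ⊆ C` a little
beyond `y`; testing `u ∈ N(y)` against such a point gives `⟪u, y - x⟫ ≤ 0`, and then
`⟪u, z - x⟫ = ⟪u, z - y⟫ + ⟪u, y - x⟫ ≤ 0` for every `z ∈ C`. -/

section IntrinsicInterior

open scoped Topology

variable {E : Type*} [AddCommGroup E] [Module ℝ E] [TopologicalSpace E]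
  [IsTopologicalAddGroup E] [ContinuousSMul ℝ E]

theorem eventually_smul_vadd_mem_of_mem_intrinsicInterior {s : Set E} {y v : E}
    (hy : y ∈ intrinsicInterior ℝ s) (hv : v ∈ (affineSpan ℝ s).direction) :
    ∀ᶠ t in 𝓝 (0 : ℝ), t • v + y ∈ s := by
  obtain ⟨y', hy'int, rfl⟩ := mem_intrinsicInterior.1 hy
  let line : ℝ → affineSpan ℝ s := fun t =>
    ⟨t • v + y', AffineSubspace.vadd_mem_of_mem_direction
      (Submodule.smul_mem _ t hv) y'.2⟩
  have hline : Continuous line :=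
    ((continuous_id.smul continuous_const).add continuous_const).subtype_mk _
  have hline0 : line 0 = y' := Subtype.ext (by simp [line])
  have hnhds : line ⁻¹' interior ((↑) ⁻¹' s) ∈ 𝓝 (0 : ℝ) :=
    hline.continuousAt.preimage_mem_nhds (isOpen_interior.mem_nhds (hline0 ▸ hy'int))
  filter_upwards [hnhds] with t ht
  exact interior_subset (s := ((↑) : affineSpan ℝ s → E) ⁻¹' s) ht

theorem exists_pos_add_smul_sub_mem_of_mem_intrinsicInterior {s : Set E} {x y : E}
    (hx : x ∈ s) (hy : y ∈ intrinsicInterior ℝ s) :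
    ∃ t : ℝ, 0 < t ∧ y + t • (y - x) ∈ s := by
  have hdir : y - x ∈ (affineSpan ℝ s).direction :=
    AffineSubspace.vsub_mem_direction (subset_affineSpan ℝ s (intrinsicInterior_subset hy))
      (subset_affineSpan ℝ s hx)
  obtain ⟨t, hts, ht⟩ := ((eventually_smul_vadd_mem_of_mem_intrinsicInterior hy hdir).filter_mono
    nhdsWithin_le_nhds).and (self_mem_nhdsWithin (s := Ioi 0)) |>.exists
  exact ⟨t, ht, by rwa [add_comm]⟩

end IntrinsicInterior

theorem inner_sub_nonpos_of_mem_normalCone {n : ℕ} {C : Set (Eu n)} {x y u : Eu n}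
    (hu : u ∈ normalCone C y) {t : ℝ} (ht : 0 < t) (hyx : y + t • (y - x) ∈ C) :
    ⟪u, y - x⟫ ≤ 0 := by
  have h := hu _ hyx
  rw [add_sub_cancel_left, real_inner_smul_right] at h
  exact nonpos_of_mul_nonpos_right h ht

theorem normalCone_subset_of_mem_intrinsicInterior {n : ℕ} {C F : Set (Eu n)} (hFC : F ⊆ C)
    {x y : Eu n} (hxF : x ∈ F) (hy : y ∈ intrinsicInterior ℝ F) :
    normalCone C y ⊆ normalCone C x := by
  intro u hu z hz
  obtain ⟨t, ht, hyx⟩ := exists_pos_add_smul_sub_mem_of_mem_intrinsicInterior hxF hy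
  have hxy := inner_sub_nonpos_of_mem_normalCone hu ht (hFC hyx)
  calc ⟪u, z - x⟫ = ⟪u, z - y⟫ + ⟪u, y - x⟫ := by rw [← inner_add_right, sub_add_sub_cancel]
    _ ≤ 0 := add_nonpos (hu z hz) hxy

theorem stmt11_general {n : ℕ} (C F : Set (Eu n)) (hF : IsFace C F)
    (x : Eu n) (hxF : x ∈ F)
    (y : Eu n) (hy : y ∈ intrinsicInterior ℝ F) :
    normalCone C y ⊆ normalCone C x :=
  normalCone_subset_of_mem_intrinsicInterior hF.1 hxF hy

/-- if `y` is in the relative interior of a face `F` containing `x`, then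
`N(y) ⊆ N(x)`. -/
theorem stmt11 {n : ℕ} (C F : Set (Eu n)) (hC : Convex ℝ C) (hF : IsFace C F)
    (x : Eu n) (hx : x ∈ C) (hxF : x ∈ F)
    (y : Eu n) (hy : y ∈ intrinsicInterior ℝ F) :
    normalCone C y ⊆ normalCone C x :=
  stmt11_general C F hF x hxF y hy
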